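/- arXiv:2407.01695 — 2 statements merged into one kernel-verified Lean document; each statement's English description precedes it below -/
import Mathlib

section
/- Let X : G → M be continuous and compactly supported. If ∫_G X(g)^* X(g) dμ(g) = 0 (Bochner integral in M), then X(g) = 0 for all g ∈ G. (Faithfulness of Haagerup's operator-valued weight on the Haagerup algebra.) -/
open MeasureTheory

/-!
`g ↦ X(g)^* X(g)` is a continuous function with values in the closed positive cone of the
C*-algebra `M`. Integration is monotone for this cone, so every set integral of it lies between
`0` and the total integral `0`; hence it vanishes almost everywhere, and by continuity and the
positivity of Haar measure on open sets, everywhere. Finally `X(g)^* X(g) = 0` forces `X(g) = 0`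
by the C*-identity.
-/

section OrderedIntegral

variable {α E : Type*} [MeasurableSpace α] {μ : Measure α}
  [NormedAddCommGroup E] [NormedSpace ℝ E] [PartialOrder E] [IsOrderedAddMonoid E]
  [IsOrderedModule ℝ E] [OrderClosedTopology E] {f : α → E}

theorem setIntegral_eq_zero_of_nonneg_of_integral_eq_zero (hf : 0 ≤ᵐ[μ] f)
    (hfi : Integrable f μ) (h : ∫ x, f x ∂μ = 0) (s : Set α) : ∫ x in s, f x ∂μ = 0 :=
  le_antisymm (h ▸ integral_mono_measure Measure.restrict_le_self hf hfi)
    (integral_nonneg_of_ae (ae_restrict_of_ae hf))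

theorem ae_eq_zero_of_nonneg_of_integral_eq_zero [CompleteSpace E] (hf : 0 ≤ᵐ[μ] f)
    (hfi : Integrable f μ) (h : ∫ x, f x ∂μ = 0) : f =ᵐ[μ] 0 :=
  hfi.ae_eq_zero_of_forall_setIntegral_eq_zero fun s _ _ ↦
    setIntegral_eq_zero_of_nonneg_of_integral_eq_zero hf hfi h s

theorem Continuous.eq_zero_of_nonneg_of_integral_eq_zero [TopologicalSpace α]
    [μ.IsOpenPosMeasure] [CompleteSpace E] (hfc : Continuous f) (hf : 0 ≤ f)
    (hfi : Integrable f μ) (h : ∫ x, f x ∂μ = 0) : f = 0 :=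
  (hfc.ae_eq_iff_eq μ continuous_const).mp
    (ae_eq_zero_of_nonneg_of_integral_eq_zero (ae_of_all μ hf) hfi h)

end OrderedIntegral

theorem eq_zero_of_integral_star_mul_self_eq_zero_general
    {G : Type*} [Group G] [TopologicalSpace G]
    [MeasurableSpace G] [BorelSpace G]
    (μ : Measure G) [μ.IsHaarMeasure]
    {M : Type*} [NormedRing M] [StarRing M] [CStarRing M] [NormedAlgebra ℂ M]
    [StarModule ℂ M] [CompleteSpace M]
    (X : G → M) (hXc : Continuous X) (hXs : HasCompactSupport X)
    (h : ∫ g, star (X g) * X g ∂μ = 0) :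
    ∀ g : G, X g = 0 := by
  -- `M` is ordered by its C*-cone `{star a * a}`, which is closed and convex.
  let : CStarAlgebra M := {}
  let := CStarAlgebra.spectralOrder M
  let := CStarAlgebra.spectralOrderedRing M
  have hc : Continuous fun g ↦ star (X g) * X g := (continuous_star.comp hXc).mul hXc
  have hzero : (fun g ↦ star (X g) * X g) = 0 :=
    hc.eq_zero_of_nonneg_of_integral_eq_zero (fun g ↦ star_mul_self_nonneg (X g))
      (hc.integrable_of_hasCompactSupport hXs.mul_left) h
  exact fun g ↦ (CStarRing.star_mul_self_eq_zero_iff (X g)).mp (congrFun hzero g)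

/-- Let `X : G → M` be continuous and compactly supported. If
`∫_G X(g)^* X(g) dμ(g) = 0` (a Bochner integral in the complex C*-algebra `M`), then
`X(g) = 0` for all `g ∈ G`. This is the faithfulness of Haagerup's operator-valued weight
on the Haagerup algebra. Here `G` is a locally compact Hausdorff topological group with
left Haar measure `μ` (in particular `μ` is positive on nonempty open sets). -/
theorem eq_zero_of_integral_star_mul_self_eq_zero
    {G : Type*} [Group G] [TopologicalSpace G] [IsTopologicalGroup G]
    [LocallyCompactSpace G] [T2Space G] [MeasurableSpace G] [BorelSpace G]
    (μ : Measure G) [μ.IsHaarMeasure]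
    {M : Type*} [NormedRing M] [StarRing M] [CStarRing M] [NormedAlgebra ℂ M]
    [StarModule ℂ M] [CompleteSpace M]
    (X : G → M) (hXc : Continuous X) (hXs : HasCompactSupport X)
    (h : ∫ g, star (X g) * X g ∂μ = 0) :
    ∀ g : G, X g = 0 :=
  eq_zero_of_integral_star_mul_self_eq_zero_general μ X hXc hXs h
end

section
/- The map ρ is multiplicative with respect to the Haagerup product: for all continuous compactly supported X, Y : G → M and all continuous compactly supported ξ : G → H, ρ(X ⋆ Y) ξ = ρ(X)(ρ(Y) ξ) as functions G → H. -/
/-!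
Write `(X ⋆ Y)(h) = ∫ α_{h⁻¹k}(X k) Y(k⁻¹h) dμ(k)` by left invariance and push
`m ↦ π(α_{g⁻¹h} m) ξ(h⁻¹g)` through this integral. The resulting double integral of
`π(α_{g⁻¹k}(X k)) π(α_{g⁻¹h}(Y(k⁻¹h))) ξ(h⁻¹g)` has a continuous, compactly supported
integrand, so Fubini applies without σ-finiteness; integrating first in `h` and substituting
`h ↦ k h` produces `π(α_{g⁻¹k}(X k)) ((ρ(Y) ξ)(k⁻¹g))`, the integrand of `ρ(X)(ρ(Y) ξ)`.
-/

open MeasureTheory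
open scoped NNReal ENNReal

/-- The Haagerup product `(X ⋆ Y)(g) = ∫_G α_h(X(g h)) Y(h⁻¹) dμ(h)` (a Bochner integral
in `M`) of functions `X Y : G → M`. -/
noncomputable def haagerupMul {G M : Type*} [Group G] [MeasurableSpace G]
    [NormedRing M] [NormedAlgebra ℂ M] [CompleteSpace M]
    (μ : Measure G) (α : G →* (M ≃ₐ[ℂ] M)) (X Y : G → M) : G → M :=
  fun g => ∫ h, (α h (X (g * h))) * Y h⁻¹ ∂μ

/-- The representation `ρ` of the Haagerup algebra:
`(ρ(X) ξ)(g) = ∫_G π(α_{g⁻¹ h}(X(h)))(ξ(h⁻¹ g)) dμ(h)`, a Bochner integral in `H`. -/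
noncomputable def rhoRep {G M H : Type*} [Group G] [MeasurableSpace G]
    [NormedRing M] [NormedAlgebra ℂ M] [StarRing M] [CompleteSpace M]
    [NormedAddCommGroup H] [InnerProductSpace ℂ H] [CompleteSpace H]
    (μ : Measure G) (α : G →* (M ≃ₐ[ℂ] M)) (π : M →⋆ₐ[ℂ] (H →L[ℂ] H))
    (X : G → M) (ξ : G → H) : G → H :=
  fun g => ∫ h, π (α (g⁻¹ * h) (X h)) (ξ (h⁻¹ * g)) ∂μ

open Function

section LeftInvariance

variable {G M H : Type*} [Group G] [MeasurableSpace G] [MeasurableMul G]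
  (μ : Measure G) [μ.IsMulLeftInvariant]
  [NormedRing M] [NormedAlgebra ℂ M] [CompleteSpace M] (α : G →* (M ≃ₐ[ℂ] M))

theorem haagerupMul_apply_eq_integral (X Y : G → M) (g : G) :
    haagerupMul μ α X Y g = ∫ k, α (g⁻¹ * k) (X k) * Y (k⁻¹ * g) ∂μ := by
  rw [haagerupMul, ← integral_mul_left_eq_self _ g⁻¹]
  simp only [mul_inv_cancel_left, mul_inv_rev, inv_inv]

theorem rhoRep_inv_mul_apply [StarRing M] [NormedAddCommGroup H] [InnerProductSpace ℂ H]
    [CompleteSpace H] (π : M →⋆ₐ[ℂ] (H →L[ℂ] H)) (Y : G → M) (ξ : G → H) (g k : G) :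
    rhoRep μ α π Y ξ (k⁻¹ * g) = ∫ h, π (α (g⁻¹ * h) (Y (k⁻¹ * h))) (ξ (h⁻¹ * g)) ∂μ := by
  rw [rhoRep, ← integral_mul_left_eq_self _ k⁻¹]
  simp only [mul_inv_rev, inv_inv, mul_assoc, mul_inv_cancel_left]

end LeftInvariance

theorem hasCompactSupport_of_support_subset_inv_mul {G A B E : Type*} [Group G]
    [TopologicalSpace G] [IsTopologicalGroup G] [Zero A] [Zero B] [Zero E]
    {u : G → A} {v : G → B} {F : G × G → E} (hu : HasCompactSupport u)
    (hv : HasCompactSupport v) (hF : support F ⊆ {p | p.2 ∈ support u ∧ p.2⁻¹ * p.1 ∈ support v}) :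
    HasCompactSupport F := by
  refine HasCompactSupport.of_support_subset_isCompact
    ((hv.prod hu).image (continuous_snd.mul continuous_fst |>.prodMk continuous_snd)) ?_
  rintro ⟨h, k⟩ hp
  obtain ⟨huk, hvk⟩ := hF hp
  exact ⟨(k⁻¹ * h, k), ⟨subset_tsupport v hvk, subset_tsupport u huk⟩, by simp⟩

section Representation

variable {G M H : Type*} [Group G] [TopologicalSpace G] [NormedRing M] [StarRing M]
  [NormedAlgebra ℂ M] [NormedAddCommGroup H] [InnerProductSpace ℂ H] [CompleteSpace H]
  {α : G →* (M ≃ₐ[ℂ] M)} (hα : Continuous fun p : G × M => α p.1 p.2)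
  {π : M →⋆ₐ[ℂ] (H →L[ℂ] H)} (hπ : Continuous π)

include hα hπ in
theorem continuous_rep_apply {Z : Type*} [TopologicalSpace Z] {a : Z → G} {m : Z → M}
    {v : Z → H} (ha : Continuous a) (hm : Continuous m) (hv : Continuous v) :
    Continuous fun z => π (α (a z) (m z)) (v z) :=
  (hπ.comp (hα.comp (ha.prodMk hm))).clm_apply hv

variable [IsTopologicalGroup G] [MeasurableSpace G] [BorelSpace G] {μ : Measure G}
  [IsFiniteMeasureOnCompacts μ] {X Y : G → M} {ξ : G → H}

include hα in
omit [StarRing M] in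
theorem integrable_haagerupMul_integrand (hXc : Continuous X) (hXs : HasCompactSupport X)
    (hYc : Continuous Y) (h : G) :
    Integrable (fun k => α (h⁻¹ * k) (X k) * Y (k⁻¹ * h)) μ := by
  refine Continuous.integrable_of_hasCompactSupport ?_ (hXs.mono fun k hk => ?_)
  · exact (hα.comp ((continuous_const_mul h⁻¹).prodMk hXc)).mul
      (hYc.comp (continuous_inv.mul continuous_const))
  · contrapose! hk
    simp [notMem_support.mp hk]

include hα hπ in
theorem integrable_rhoRep_integrand (hYc : Continuous Y)
    (hYs : HasCompactSupport Y) (hξc : Continuous ξ) (g k : G) :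
    Integrable (fun h => π (α (g⁻¹ * h) (Y (k⁻¹ * h))) (ξ (h⁻¹ * g))) μ := by
  refine Continuous.integrable_of_hasCompactSupport ?_
    ((hYs.comp_homeomorph (Homeomorph.mulLeft k⁻¹)).mono fun h hh => ?_)
  · exact continuous_rep_apply hα hπ (continuous_const_mul g⁻¹)
      (hYc.comp (continuous_const_mul k⁻¹)) (hξc.comp (continuous_inv.mul continuous_const))
  · contrapose! hh
    simp [show Y (k⁻¹ * h) = 0 from notMem_support.mp hh]

end Representation

section Kernel

variable {G M H : Type*} [Group G] [NormedRing M] [StarRing M] [NormedAlgebra ℂ M]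
  [NormedAddCommGroup H] [InnerProductSpace ℂ H] [CompleteSpace H]

noncomputable def rhoRepMulKernel (α : G →* (M ≃ₐ[ℂ] M)) (π : M →⋆ₐ[ℂ] (H →L[ℂ] H)) (X Y : G → M)
    (ξ : G → H) (g h k : G) : H :=
  π (α (g⁻¹ * k) (X k)) (π (α (g⁻¹ * h) (Y (k⁻¹ * h))) (ξ (h⁻¹ * g)))

variable [TopologicalSpace G] [IsTopologicalGroup G]
  {α : G →* (M ≃ₐ[ℂ] M)} (hα : Continuous fun p : G × M => α p.1 p.2)
  {π : M →⋆ₐ[ℂ] (H →L[ℂ] H)} (hπ : Continuous π) {X Y : G → M} {ξ : G → H}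

include hα hπ in
theorem continuous_uncurry_rhoRepMulKernel (hXc : Continuous X) (hYc : Continuous Y)
    (hξc : Continuous ξ) (g : G) : Continuous (uncurry (rhoRepMulKernel α π X Y ξ g)) :=
  continuous_rep_apply hα hπ (continuous_const.mul continuous_snd) (hXc.comp continuous_snd)
    (continuous_rep_apply hα hπ (continuous_const.mul continuous_fst)
      (hYc.comp (continuous_snd.inv.mul continuous_fst))
      (hξc.comp (continuous_fst.inv.mul continuous_const)))

theorem hasCompactSupport_uncurry_rhoRepMulKernel (hXs : HasCompactSupport X)
    (hYs : HasCompactSupport Y) (g : G) :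
    HasCompactSupport (uncurry (rhoRepMulKernel α π X Y ξ g)) := by
  refine hasCompactSupport_of_support_subset_inv_mul hXs hYs fun ⟨h, k⟩ hp =>
    ⟨fun hX => hp (by simp [rhoRepMulKernel, hX]), fun hY => hp (by simp [rhoRepMulKernel, hY])⟩

variable [MeasurableSpace G] [BorelSpace G] {μ : Measure G} [IsFiniteMeasureOnCompacts μ]
  [μ.IsMulLeftInvariant] [CompleteSpace M]

include hα hπ in
theorem rep_haagerupMul_apply_eq_integral_rhoRepMulKernel (hXc : Continuous X)
    (hXs : HasCompactSupport X) (hYc : Continuous Y) (g h : G) :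
    π (α (g⁻¹ * h) (haagerupMul μ α X Y h)) (ξ (h⁻¹ * g))
      = ∫ k, rhoRepMulKernel α π X Y ξ g h k ∂μ := by
  let L : M →L[ℂ] H :=
    ⟨(ContinuousLinearMap.apply ℂ H (ξ (h⁻¹ * g))).toLinearMap ∘ₗ π.toAlgHom.toLinearMap ∘ₗ
      (α (g⁻¹ * h)).toLinearMap,
      continuous_rep_apply hα hπ continuous_const continuous_id continuous_const⟩
  rw [haagerupMul_apply_eq_integral]
  refine (L.integral_comp_comm (integrable_haagerupMul_integrand hα hXc hXs hYc h)).symm.trans ?_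
  congr with k
  simp [L, rhoRepMulKernel, ← AlgEquiv.mul_apply]

include hα hπ in
theorem integral_rhoRepMulKernel_eq_rep_apply_rhoRep (hYc : Continuous Y)
    (hYs : HasCompactSupport Y) (hξc : Continuous ξ) (g k : G) :
    ∫ h, rhoRepMulKernel α π X Y ξ g h k ∂μ
      = π (α (g⁻¹ * k) (X k)) (rhoRep μ α π Y ξ (k⁻¹ * g)) := by
  rw [rhoRep_inv_mul_apply, ← ContinuousLinearMap.integral_comp_comm _
    (integrable_rhoRep_integrand hα hπ hYc hYs hξc g k)]
  rfl

end Kernel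

theorem rhoRep_mul_general
    {G : Type*} [Group G] [TopologicalSpace G] [IsTopologicalGroup G]
    [MeasurableSpace G] [BorelSpace G]
    (μ : Measure G) [μ.IsHaarMeasure]
    {M : Type*} [NormedRing M] [StarRing M] [CStarRing M] [NormedAlgebra ℂ M]
    [StarModule ℂ M] [CompleteSpace M]
    {H : Type*} [NormedAddCommGroup H] [InnerProductSpace ℂ H] [CompleteSpace H]
    (α : G →* (M ≃ₐ[ℂ] M))
    (hαcont : Continuous fun p : G × M => α p.1 p.2)
    (π : M →⋆ₐ[ℂ] (H →L[ℂ] H))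
    (X Y : G → M) (hXc : Continuous X) (hXs : HasCompactSupport X)
    (hYc : Continuous Y) (hYs : HasCompactSupport Y)
    (ξ : G → H) (hξc : Continuous ξ) :
    rhoRep μ α π (haagerupMul μ α X Y) ξ = rhoRep μ α π X (rhoRep μ α π Y ξ) := by
  let _ : CStarAlgebra M := ⟨⟩
  -- *-homomorphisms between C*-algebras are contractive, hence continuous.
  have hπ : Continuous π := by open scoped CStarAlgebra in exact map_continuous π
  funext g
  calc rhoRep μ α π (haagerupMul μ α X Y) ξ g
      = ∫ h, ∫ k, rhoRepMulKernel α π X Y ξ g h k ∂μ ∂μ :=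
        integral_congr_ae <| .of_forall fun h =>
          rep_haagerupMul_apply_eq_integral_rhoRepMulKernel hαcont hπ hXc hXs hYc g h
    _ = ∫ k, ∫ h, rhoRepMulKernel α π X Y ξ g h k ∂μ ∂μ :=
        integral_integral_swap_of_hasCompactSupport
          (continuous_uncurry_rhoRepMulKernel hαcont hπ hXc hYc hξc g)
          (hasCompactSupport_uncurry_rhoRepMulKernel hXs hYs g)
    _ = rhoRep μ α π X (rhoRep μ α π Y ξ) g :=
        integral_congr_ae <| .of_forall fun k =>
          integral_rhoRepMulKernel_eq_rep_apply_rhoRep hαcont hπ hYc hYs hξc g k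

/-- The map `ρ` is multiplicative with respect to the Haagerup product:
for all continuous compactly supported `X, Y : G → M` and all continuous compactly
supported `ξ : G → H`, `ρ(X ⋆ Y) ξ = ρ(X)(ρ(Y) ξ)` as functions `G → H`. Here `G` is a
locally compact Hausdorff topological group with left Haar measure `μ`, `δ` is the modular
function of `μ`, `M` is a complex C*-algebra with a continuous action `α` of `G` by
*-automorphisms, `H` is a complex Hilbert space, and `π : M → B(H)` is a *-homomorphism. -/
theorem rhoRep_mul
    {G : Type*} [Group G] [TopologicalSpace G] [IsTopologicalGroup G]
    [LocallyCompactSpace G] [T2Space G] [MeasurableSpace G] [BorelSpace G]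
    (μ : Measure G) [μ.IsHaarMeasure]
    {M : Type*} [NormedRing M] [StarRing M] [CStarRing M] [NormedAlgebra ℂ M]
    [StarModule ℂ M] [CompleteSpace M]
    {H : Type*} [NormedAddCommGroup H] [InnerProductSpace ℂ H] [CompleteSpace H]
    (δ : G →* ℝ≥0) (hδcont : Continuous δ)
    (hδ : ∀ (g : G) (E : Set G), MeasurableSet E →
      μ ((fun x => x * g) '' E) = (δ g : ℝ≥0∞) * μ E)
    (α : G →* (M ≃ₐ[ℂ] M)) (hαstar : ∀ (g : G) (x : M), α g (star x) = star (α g x))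
    (hαcont : Continuous fun p : G × M => α p.1 p.2)
    (π : M →⋆ₐ[ℂ] (H →L[ℂ] H))
    (X Y : G → M) (hXc : Continuous X) (hXs : HasCompactSupport X)
    (hYc : Continuous Y) (hYs : HasCompactSupport Y)
    (ξ : G → H) (hξc : Continuous ξ) (hξs : HasCompactSupport ξ) :
    rhoRep μ α π (haagerupMul μ α X Y) ξ = rhoRep μ α π X (rhoRep μ α π Y ξ) :=
  rhoRep_mul_general μ α hαcont π X Y hXc hXs hYc hYs ξ hξc
end
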